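/- arXiv:2101.06884 — 3 statements merged into one kernel-verified Lean document; each statement's English description precedes it below -/
import Mathlib

section
/- (Proposition 2 of the paper, evaluated at test points; the moments of Algorithm 1.) Let n_S, n_T ≥ 1, p ≥ 1, σ_T² > 0, m̄_S ∈ ℝ^{n_S}, y_T ∈ ℝ^{n_T}, let R̄_S be a symmetric positive-definite n_S×n_S matrix, and let K_full be a symmetric positive-definite (n_S+n_T+p)×(n_S+n_T+p) matrix partitioned into blocks K ∈ ℝ^{(n_S+n_T)×(n_S+n_T)} (training block), k ∈ ℝ^{(n_S+n_T)×p} (cross block), and K* ∈ ℝ^{p×p} (test block). Set D_blk := blkdiag(R̄_S, σ_T² I_{n_T}). Then for every g ∈ ℝᵖ, ∫_{ℝ^{n_S+n_T}} N(y_T; f_T, σ_T² I_{n_T}) · N(m̄_S; f_S, R̄_S) · N((f_S, f_T, g); 0, K_full) d(f_S, f_T) = N((m̄_S, y_T); 0, K + D_blk) · N(g; m*, K°*), where m* := kᵀ(K + D_blk)⁻¹ (m̄_S, y_T) and K°* := K* − kᵀ(K + D_blk)⁻¹ k, and K°* is symmetric positive definite. In particular, the marginal of the FPD-optimal posterior at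 the test entries is Gaussian with mean kᵀ(K + D_blk)⁻¹ (m̄_S, y_T) and covariance K* − kᵀ(K + D_blk)⁻¹ k. -/
open MeasureTheory Matrix

/-- The multivariate Gaussian density
`N(x; μ, S) = (2π)^(−n/2) (det S)^(−1/2) exp(−(1/2)(x−μ)ᵀ S⁻¹ (x−μ))`
on `ι → ℝ`, where `n = card ι`. -/
noncomputable def gaussDensity {ι : Type} [Fintype ι] [DecidableEq ι]
    (μ : ι → ℝ) (S : Matrix ι ι ℝ) (x : ι → ℝ) : ℝ :=
  (2 * Real.pi) ^ (-(Fintype.card ι : ℝ) / 2) * S.det ^ (-(1 : ℝ) / 2) *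
    Real.exp (-(1 / 2) * ((x - μ) ⬝ᵥ (S⁻¹ *ᵥ (x - μ))))

set_option linter.unusedSectionVars false

namespace GaussAux

section Blocks


variable {m n : Type} [Fintype m] [DecidableEq m] [Fintype n] [DecidableEq n]

lemma posDef_toBlocks₁₁ {A : Matrix m m ℝ} {B : Matrix m n ℝ} {C : Matrix n n ℝ}
    (hG : (fromBlocks A B Bᵀ C).PosDef) : A.PosDef := by
  rw [Matrix.posDef_iff_dotProduct_mulVec]; constructor
  · ext i j
    have := congr_fun (congr_fun hG.1.eq (Sum.inl i)) (Sum.inl j)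
    simpa [conjTranspose, fromBlocks] using this
  · intro x hx
    have hx' : Sum.elim x (0 : n → ℝ) ≠ 0 := by
      intro h
      exact hx (funext fun i => congr_fun h (Sum.inl i))
    have := hG.dotProduct_mulVec_pos hx'
    simpa [fromBlocks_mulVec, sumElim_dotProduct_sumElim] using this

lemma schur_posDef {A : Matrix m m ℝ} {B : Matrix m n ℝ} {C : Matrix n n ℝ}
    (hG : (fromBlocks A B Bᵀ C).PosDef) : (C - Bᵀ * A⁻¹ * B).PosDef := by
  have hA : A.PosDef := posDef_toBlocks₁₁ hG
  haveI : Invertible A := A.invertibleOfIsUnitDet hA.det_pos.ne'.isUnit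
  have hBt : (Bᴴ : Matrix n m ℝ) = Bᵀ := Matrix.conjTranspose_eq_transpose_of_trivial B
  rw [Matrix.posDef_iff_dotProduct_mulVec]; constructor
  · have h := (Matrix.IsHermitian.fromBlocks₁₁ B C hA.1).mp (by rw [hBt]; exact hG.1)
    rwa [hBt] at h
  · intro y hy
    have key := Matrix.schur_complement_eq₁₁ B C (-((A⁻¹ * B) *ᵥ y)) y hA.1
    rw [hBt] at key
    have h0 : -((A⁻¹ * B) *ᵥ y) + (A⁻¹ * B) *ᵥ y = 0 := by ring_nf
    rw [h0] at key
    have hq := hG.dotProduct_mulVec_pos (x := Sum.elim (-((A⁻¹ * B) *ᵥ y)) y) (by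
      intro h
      exact hy (funext fun i => congr_fun h (Sum.inr i)))
    rw [show (star (Sum.elim (-((A⁻¹ * B) *ᵥ y)) y)) = Sum.elim (-((A⁻¹ * B) *ᵥ y)) y by simp,
      dotProduct_mulVec] at hq
    simp only [star_trivial] at key
    rw [key] at hq
    simpa [dotProduct_mulVec] using hq

lemma posDef_fromBlocks {A : Matrix m m ℝ} {B : Matrix m n ℝ} {C : Matrix n n ℝ}
    (hA : A.PosDef) (hS : (C - Bᵀ * A⁻¹ * B).PosDef) : (fromBlocks A B Bᵀ C).PosDef := by
  haveI : Invertible A := A.invertibleOfIsUnitDet hA.det_pos.ne'.isUnit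
  have hBt : (Bᴴ : Matrix n m ℝ) = Bᵀ := Matrix.conjTranspose_eq_transpose_of_trivial B
  rw [Matrix.posDef_iff_dotProduct_mulVec]; constructor
  · have := (Matrix.IsHermitian.fromBlocks₁₁ B C hA.1).mpr (by rw [hBt]; exact hS.1)
    rwa [hBt] at this
  · intro z hz
    have key := Matrix.schur_complement_eq₁₁ B C (z ∘ Sum.inl) (z ∘ Sum.inr) hA.1
    rw [hBt, Sum.elim_comp_inl_inr] at key
    simp only [star_trivial] at key
    rw [star_trivial, dotProduct_mulVec, key]
    rcases eq_or_ne (z ∘ Sum.inr) 0 with h2 | h2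
    · have h1 : z ∘ Sum.inl ≠ 0 := by
        intro h1
        apply hz
        funext i
        cases i with
        | inl i => exact congr_fun h1 i
        | inr i => exact congr_fun h2 i
      have hfirst : 0 < (z ∘ Sum.inl + (A⁻¹ * B) *ᵥ (z ∘ Sum.inr)) ᵥ* A ⬝ᵥ
          (z ∘ Sum.inl + (A⁻¹ * B) *ᵥ (z ∘ Sum.inr)) := by
        rw [← dotProduct_mulVec]
        refine hA.dotProduct_mulVec_pos (x := z ∘ Sum.inl + (A⁻¹ * B) *ᵥ (z ∘ Sum.inr)) ?_
        simp [h2]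
        · simpa [h2] using h1
      have hsecond : (0:ℝ) ≤ (z ∘ Sum.inr) ᵥ* (C - Bᵀ * A⁻¹ * B) ⬝ᵥ (z ∘ Sum.inr) := by
        rw [h2]; simp
      linarith
    · have hsecond : 0 < (z ∘ Sum.inr) ᵥ* (C - Bᵀ * A⁻¹ * B) ⬝ᵥ (z ∘ Sum.inr) := by
        rw [← dotProduct_mulVec]
        exact hS.dotProduct_mulVec_pos h2
      have hfirst : (0:ℝ) ≤ (z ∘ Sum.inl + (A⁻¹ * B) *ᵥ (z ∘ Sum.inr)) ᵥ* A ⬝ᵥ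
          (z ∘ Sum.inl + (A⁻¹ * B) *ᵥ (z ∘ Sum.inr)) := by
        rw [← dotProduct_mulVec]
        simpa using hA.posSemidef.dotProduct_mulVec_nonneg (z ∘ Sum.inl + (A⁻¹ * B) *ᵥ (z ∘ Sum.inr))
      linarith


lemma quad_decomp {A : Matrix m m ℝ} {B : Matrix m n ℝ} {C : Matrix n n ℝ}
    (hA : A.PosDef) (hS : (C - Bᵀ * A⁻¹ * B).PosDef) (x : m → ℝ) (y : n → ℝ) :
    (Sum.elim x y) ⬝ᵥ ((fromBlocks A B Bᵀ C)⁻¹ *ᵥ (Sum.elim x y)) =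
      x ⬝ᵥ (A⁻¹ *ᵥ x) +
        (y - Bᵀ *ᵥ (A⁻¹ *ᵥ x)) ⬝ᵥ ((C - Bᵀ * A⁻¹ * B)⁻¹ *ᵥ (y - Bᵀ *ᵥ (A⁻¹ *ᵥ x))) := by
  obtain ⟨S, hSdef⟩ : ∃ S, C - Bᵀ * A⁻¹ * B = S := ⟨_, rfl⟩
  obtain ⟨w, hw⟩ : ∃ w, y - Bᵀ *ᵥ (A⁻¹ *ᵥ x) = w := ⟨_, rfl⟩
  rw [hSdef] at hS
  have hAu : IsUnit A.det := hA.det_pos.ne'.isUnit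
  have hSu : IsUnit S.det := hS.det_pos.ne'.isUnit
  have hG : (fromBlocks A B Bᵀ C).PosDef := posDef_fromBlocks hA (hSdef ▸ hS)
  have hGu : IsUnit (fromBlocks A B Bᵀ C).det := hG.det_pos.ne'.isUnit
  obtain ⟨p, hp⟩ : ∃ p, A⁻¹ *ᵥ x - (A⁻¹ * B) *ᵥ (S⁻¹ *ᵥ w) = p := ⟨_, rfl⟩
  have hc1 : A *ᵥ p + B *ᵥ (S⁻¹ *ᵥ w) = x := by
    rw [← hp, mulVec_sub, mulVec_mulVec, mulVec_mulVec, ← Matrix.mul_assoc,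
      Matrix.mul_nonsing_inv _ hAu, Matrix.one_mulVec, Matrix.one_mul]
    abel
  have hc2 : Bᵀ *ᵥ p + C *ᵥ (S⁻¹ *ᵥ w) = y := by
    rw [← hp, mulVec_sub, mulVec_mulVec, mulVec_mulVec, ← Matrix.mul_assoc]
    have h1 : (Bᵀ * A⁻¹) *ᵥ x - (Bᵀ * A⁻¹ * B) *ᵥ (S⁻¹ *ᵥ w) + C *ᵥ (S⁻¹ *ᵥ w) =
        (Bᵀ * A⁻¹) *ᵥ x + ((C - Bᵀ * A⁻¹ * B) * S⁻¹) *ᵥ w := by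
      simp only [Matrix.sub_mul, sub_mulVec, ← Matrix.mulVec_mulVec]
      abel
    rw [h1, hSdef, Matrix.mul_nonsing_inv _ hSu, Matrix.one_mulVec, ← hw, mulVec_mulVec]
    abel
  have hGv : (fromBlocks A B Bᵀ C) *ᵥ (Sum.elim p (S⁻¹ *ᵥ w)) = Sum.elim x y := by
    rw [fromBlocks_mulVec]
    simp only [Sum.elim_comp_inl, Sum.elim_comp_inr]
    rw [hc1, hc2]
  have hinv : (fromBlocks A B Bᵀ C)⁻¹ *ᵥ (Sum.elim x y) = Sum.elim p (S⁻¹ *ᵥ w) := by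
    rw [← hGv, mulVec_mulVec, Matrix.nonsing_inv_mul _ hGu, Matrix.one_mulVec]
  rw [hinv, sumElim_dotProduct_sumElim, hSdef, hw, ← hp, dotProduct_sub]
  have hAinvT : A⁻¹ᵀ = A⁻¹ := by
    have := hA.1.inv.eq
    simpa using this
  have hkey : x ⬝ᵥ ((A⁻¹ * B) *ᵥ (S⁻¹ *ᵥ w)) = (Bᵀ *ᵥ (A⁻¹ *ᵥ x)) ⬝ᵥ (S⁻¹ *ᵥ w) := by
    rw [dotProduct_mulVec x (A⁻¹ * B), ← mulVec_transpose, Matrix.transpose_mul, hAinvT,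
      mulVec_mulVec]
  have hy : y ⬝ᵥ (S⁻¹ *ᵥ w) = w ⬝ᵥ (S⁻¹ *ᵥ w) + (Bᵀ *ᵥ (A⁻¹ *ᵥ x)) ⬝ᵥ (S⁻¹ *ᵥ w) := by
    rw [← hw, sub_dotProduct]
    ring
  rw [hkey, hy]
  ring


lemma gauss_fromBlocks {A : Matrix m m ℝ} {B : Matrix m n ℝ} {C : Matrix n n ℝ}
    (hG : (fromBlocks A B Bᵀ C).PosDef) (x : m → ℝ) (y : n → ℝ) :
    gaussDensity 0 (fromBlocks A B Bᵀ C) (Sum.elim x y) =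
      gaussDensity 0 A x * gaussDensity (Bᵀ *ᵥ (A⁻¹ *ᵥ x)) (C - Bᵀ * A⁻¹ * B) y := by
  have hA : A.PosDef := posDef_toBlocks₁₁ hG
  have hS : (C - Bᵀ * A⁻¹ * B).PosDef := schur_posDef hG
  haveI : Invertible A := A.invertibleOfIsUnitDet hA.det_pos.ne'.isUnit
  have hdet : (fromBlocks A B Bᵀ C).det = A.det * (C - Bᵀ * A⁻¹ * B).det := by
    rw [Matrix.det_fromBlocks₁₁, Matrix.invOf_eq_nonsing_inv]
  have hcard : (Fintype.card (m ⊕ n) : ℝ) = Fintype.card m + Fintype.card n := by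
    rw [Fintype.card_sum]; push_cast; ring
  have hq := quad_decomp hA hS x y
  have h2pi : (0:ℝ) < 2 * Real.pi := by positivity
  unfold gaussDensity
  rw [hdet, hcard, sub_zero, sub_zero, hq,
    Real.mul_rpow hA.det_pos.le hS.det_pos.le,
    show -(((Fintype.card m : ℝ) + Fintype.card n)) / 2 =
      (-(Fintype.card m : ℝ) / 2) + (-(Fintype.card n : ℝ) / 2) by ring,
    Real.rpow_add h2pi, mul_add, Real.exp_add]
  ring


end Blocks

section Anal


variable {ι : Type} [Fintype ι] [DecidableEq ι]

lemma continuous_quad (M : Matrix ι ι ℝ) : Continuous fun x : ι → ℝ => x ⬝ᵥ (M *ᵥ x) := by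
  unfold dotProduct Matrix.mulVec
  refine continuous_finset_sum _ fun i _ => ?_
  refine (continuous_apply i).mul (continuous_finset_sum _ fun j _ => ?_)
  exact continuous_const.mul (continuous_apply j)

theorem integral_gaussDensity {S : Matrix ι ι ℝ} (hS : S.PosDef) (μ : ι → ℝ) :
    ∫ x : ι → ℝ, gaussDensity μ S x = 1 := by
  obtain ⟨L, hLsd, hLL⟩ : ∃ L : Matrix ι ι ℝ, L.PosSemidef ∧ L * L = S :=
    open scoped MatrixOrder in
    ⟨CFC.sqrt S, (CFC.sqrt_nonneg S).posSemidef, CFC.sqrt_mul_sqrt_self S hS.posSemidef.nonneg⟩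
  have hdetS : 0 < S.det := hS.det_pos
  have hdetL2 : L.det * L.det = S.det := by rw [← det_mul, hLL]
  have hdetL_ne : L.det ≠ 0 := by
    intro h
    rw [h, zero_mul] at hdetL2
    exact hdetS.ne' hdetL2.symm
  have hLu : IsUnit L.det := isUnit_iff_ne_zero.mpr hdetL_ne
  -- step 1: translate
  unfold gaussDensity
  rw [MeasureTheory.integral_const_mul]
  have htrans : (∫ x : ι → ℝ, Real.exp (-(1/2) * ((x - μ) ⬝ᵥ (S⁻¹ *ᵥ (x - μ))))) =
      ∫ x : ι → ℝ, Real.exp (-(1/2) * (x ⬝ᵥ (S⁻¹ *ᵥ x))) :=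
    MeasureTheory.integral_sub_right_eq_self
      (fun v => Real.exp (-(1/2) * (v ⬝ᵥ (S⁻¹ *ᵥ v)))) μ
  rw [htrans]
  -- step 2: substitute x = L y
  have hmeas : Measure.map (Matrix.toLin' L) volume =
      ENNReal.ofReal |L.det⁻¹| • (volume : Measure (ι → ℝ)) :=
    Real.map_matrix_volume_pi_eq_smul_volume_pi hdetL_ne
  have hcontf : Continuous fun x : ι → ℝ => Real.exp (-(1/2) * (x ⬝ᵥ (S⁻¹ *ᵥ x))) :=
    (Real.continuous_exp.comp ((continuous_const.mul (continuous_quad S⁻¹))))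
  have hsub : (∫ y : ι → ℝ, Real.exp (-(1/2) * ((L *ᵥ y) ⬝ᵥ (S⁻¹ *ᵥ (L *ᵥ y))))) =
      |L.det⁻¹| * ∫ x : ι → ℝ, Real.exp (-(1/2) * (x ⬝ᵥ (S⁻¹ *ᵥ x))) := by
    have h1 : (∫ y : ι → ℝ, Real.exp (-(1/2) * ((L *ᵥ y) ⬝ᵥ (S⁻¹ *ᵥ (L *ᵥ y))))) =
        ∫ x, Real.exp (-(1/2) * (x ⬝ᵥ (S⁻¹ *ᵥ x))) ∂(Measure.map (Matrix.toLin' L) volume) := by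
      rw [MeasureTheory.integral_map (by
          exact ((Matrix.toLin' L).continuous_of_finiteDimensional).aemeasurable)
        hcontf.aestronglyMeasurable]
      simp [Matrix.toLin'_apply]
    rw [h1, hmeas, MeasureTheory.integral_smul_measure, ENNReal.toReal_ofReal (abs_nonneg _),
      smul_eq_mul]
  -- simplify quadratic under substitution
  have hquad : ∀ y : ι → ℝ, (L *ᵥ y) ⬝ᵥ (S⁻¹ *ᵥ (L *ᵥ y)) = y ⬝ᵥ y := by
    intro y
    have hsymm : Lᵀ = L := hLsd.1
    have hSinv : S⁻¹ = L⁻¹ * L⁻¹ := by rw [← hLL, Matrix.mul_inv_rev]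
    rw [hSinv, mulVec_mulVec, Matrix.mul_assoc, Matrix.nonsing_inv_mul _ hLu, Matrix.mul_one]
    calc (L *ᵥ y) ⬝ᵥ (L⁻¹ *ᵥ y)
        = (y ᵥ* Lᵀ) ⬝ᵥ (L⁻¹ *ᵥ y) := by rw [← Matrix.vecMul_transpose]
      _ = (y ᵥ* L) ⬝ᵥ (L⁻¹ *ᵥ y) := by rw [hsymm]
      _ = y ⬝ᵥ (L *ᵥ (L⁻¹ *ᵥ y)) := (dotProduct_mulVec _ _ _).symm
      _ = y ⬝ᵥ ((L * L⁻¹) *ᵥ y) := by rw [mulVec_mulVec]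
      _ = y ⬝ᵥ y := by rw [Matrix.mul_nonsing_inv _ hLu, Matrix.one_mulVec]
  -- step 3: compute the standard gaussian integral
  have hstd : (∫ y : ι → ℝ, Real.exp (-(1/2) * (y ⬝ᵥ y))) =
      Real.sqrt (2 * Real.pi) ^ (Fintype.card ι) := by
    have : ∀ y : ι → ℝ, Real.exp (-(1/2) * (y ⬝ᵥ y)) =
        ∏ i, Real.exp (-(1/2) * (y i ^ 2)) := by
      intro y
      rw [← Real.exp_sum]
      congr 1
      unfold dotProduct
      rw [Finset.mul_sum]
      congr 1
      funext i
      ring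
    simp_rw [this]
    rw [MeasureTheory.volume_pi, MeasureTheory.integral_fintype_prod_eq_pow (ι := ι) (fun t : ℝ => Real.exp (-(1/2) * t ^ 2))]
    congr 1
    have := integral_gaussian (1/2 : ℝ)
    simp_rw [show ∀ t : ℝ, -(1/2 : ℝ) * t ^ 2 = -((1/2 : ℝ) * t^2) by intro t; ring] at this ⊢
    rw [this]
    rw [show Real.pi / (1/2 : ℝ) = 2 * Real.pi by ring]
  -- put everything together
  have hLdet_inv_ne : |L.det⁻¹| ≠ 0 := by simp [hdetL_ne]
  have hflip : (∫ x : ι → ℝ, Real.exp (-(1/2) * (x ⬝ᵥ (S⁻¹ *ᵥ x)))) =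
      |L.det| * Real.sqrt (2 * Real.pi) ^ (Fintype.card ι) := by
    have h := hsub
    simp_rw [hquad] at h
    rw [hstd, abs_inv] at h
    have habs0 : |L.det| ≠ 0 := abs_ne_zero.mpr hdetL_ne
    have h2 := h.symm
    rw [inv_mul_eq_iff_eq_mul₀ habs0] at h2
    exact h2
  rw [hflip]
  have habs : |L.det| = Real.sqrt S.det := by
    rw [← hdetL2, ← Real.sqrt_mul_self_eq_abs]
  rw [habs]
  have hsqrt_pow : Real.sqrt (2 * Real.pi) ^ (Fintype.card ι) =
      (2 * Real.pi) ^ ((Fintype.card ι : ℝ) / 2) := by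
    rw [Real.sqrt_eq_rpow, ← Real.rpow_natCast ((2 * Real.pi) ^ ((1:ℝ)/2)) (Fintype.card ι),
      ← Real.rpow_mul (by positivity)]
    congr 1
    ring
  have hsqrtS : Real.sqrt S.det = S.det ^ ((1:ℝ)/2) := Real.sqrt_eq_rpow _
  rw [hsqrt_pow, hsqrtS]
  have h2pi : (0:ℝ) < 2 * Real.pi := by positivity
  rw [show (2 * Real.pi) ^ (-(Fintype.card ι : ℝ) / 2) * S.det ^ (-(1:ℝ)/2) *
      (S.det ^ ((1:ℝ)/2) * (2 * Real.pi) ^ ((Fintype.card ι : ℝ) / 2)) =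
      ((2 * Real.pi) ^ (-(Fintype.card ι : ℝ) / 2) * (2 * Real.pi) ^ ((Fintype.card ι : ℝ) / 2)) *
      (S.det ^ (-(1:ℝ)/2) * S.det ^ ((1:ℝ)/2)) by ring,
    ← Real.rpow_add h2pi, ← Real.rpow_add hdetS,
    show (-(Fintype.card ι:ℝ)/2 + (Fintype.card ι:ℝ)/2) = 0 by ring,
    show (-(1:ℝ)/2 + 1/2) = 0 by ring, Real.rpow_zero, Real.rpow_zero]
  norm_num


end Anal

section Misc


variable {ι κ : Type} [Fintype ι] [DecidableEq ι] [Fintype κ] [DecidableEq κ]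

lemma gauss_swap (μ x : ι → ℝ) (S : Matrix ι ι ℝ) :
    gaussDensity μ S x = gaussDensity x S μ := by
  unfold gaussDensity
  congr 2
  rw [show x - μ = -(μ - x) by abel, Matrix.mulVec_neg, neg_dotProduct, dotProduct_neg, neg_neg]

lemma gauss_shift (μ x : ι → ℝ) (S : Matrix ι ι ℝ) :
    gaussDensity μ S x = gaussDensity 0 S (x - μ) := by
  simp [gaussDensity]

lemma dot_comp_equiv (e : κ ≃ ι) (u v : ι → ℝ) : (u ∘ e) ⬝ᵥ (v ∘ e) = u ⬝ᵥ v :=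
  Fintype.sum_equiv e _ _ (fun _ => rfl)

lemma gauss_reindex (e : κ ≃ ι) (μ : ι → ℝ) (S : Matrix ι ι ℝ) (x : ι → ℝ) :
    gaussDensity (μ ∘ e) (S.submatrix e e) (x ∘ e) = gaussDensity μ S x := by
  unfold gaussDensity
  rw [Fintype.card_congr e, Matrix.det_submatrix_equiv_self, Matrix.inv_submatrix_equiv,
    show x ∘ e - μ ∘ e = (x - μ) ∘ e from rfl,
    Matrix.submatrix_mulVec_equiv, show ((x - μ) ∘ e) ∘ e.symm = x - μ by
      funext i; simp, dot_comp_equiv]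

lemma posDef_submatrix_equiv {S : Matrix ι ι ℝ} (hS : S.PosDef) (e : κ ≃ ι) :
    (S.submatrix e e).PosDef := by
  rw [Matrix.posDef_iff_dotProduct_mulVec]; constructor
  · exact hS.1.submatrix e
  · intro x hx
    have hx' : x ∘ e.symm ≠ 0 := by
      intro h
      apply hx
      funext k
      have := congr_fun h (e k)
      simpa using this
    have h := hS.dotProduct_mulVec_pos hx'
    rw [star_trivial] at h ⊢
    rw [Matrix.submatrix_mulVec_equiv]
    have hxe : x = (x ∘ e.symm) ∘ e := by funext k; simp
    calc (0:ℝ) < (x ∘ e.symm) ⬝ᵥ (S *ᵥ (x ∘ e.symm)) := h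
      _ = ((x ∘ e.symm) ∘ e) ⬝ᵥ ((S *ᵥ (x ∘ e.symm)) ∘ e) := (dot_comp_equiv e _ _).symm
      _ = x ⬝ᵥ ((S *ᵥ (x ∘ e.symm)) ∘ e) := by rw [← hxe]

lemma posSemidef_corner {D : Matrix ι ι ℝ} (hD : D.PosSemidef) :
    (fromBlocks D 0 0 0 : Matrix (ι ⊕ κ) (ι ⊕ κ) ℝ).PosSemidef := by
  rw [Matrix.posSemidef_iff_dotProduct_mulVec]; constructor
  · unfold Matrix.IsHermitian
    rw [Matrix.fromBlocks_conjTranspose]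
    simp only [Matrix.conjTranspose_zero]
    rw [hD.1.eq]
  · intro z
    rw [star_trivial, ← Sum.elim_comp_inl_inr z, fromBlocks_mulVec]
    simp only [Sum.elim_comp_inl, Sum.elim_comp_inr, Matrix.mulVec_zero, add_zero, zero_add,
      Matrix.zero_mulVec, sumElim_dotProduct_sumElim, dotProduct_zero]
    simpa using hD.dotProduct_mulVec_nonneg (z ∘ Sum.inl)


end Misc

end GaussAux

open GaussAux

/-- Proposition 2 of the paper evaluated at test points; the moments of
Algorithm 1: with the full prior covariance `K_full = [[K, k], [kᵀ, K*]]` symmetric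
positive definite and `D_blk = blkdiag(R̄_S, σ_T² I)`, for every `g ∈ ℝᵖ`,
`∫ N(y_T; f_T, σ_T² I) N(m̄_S; f_S, R̄_S) N((f_S, f_T, g); 0, K_full) d(f_S, f_T)
  = N((m̄_S, y_T); 0, K + D_blk) · N(g; m*, K°*)`,
where `m* = kᵀ(K + D_blk)⁻¹(m̄_S, y_T)`, `K°* = K* − kᵀ(K + D_blk)⁻¹k`, and `K°*` is
symmetric positive definite. -/
theorem fpd_posterior_test_points (nS nT p : ℕ) (hnS : 1 ≤ nS) (hnT : 1 ≤ nT)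
    (hp : 1 ≤ p) (σT2 : ℝ) (hσ : 0 < σT2) (mS : Fin nS → ℝ) (yT : Fin nT → ℝ)
    (RS : Matrix (Fin nS) (Fin nS) ℝ) (hRS : RS.PosDef)
    (K : Matrix (Fin nS ⊕ Fin nT) (Fin nS ⊕ Fin nT) ℝ)
    (k : Matrix (Fin nS ⊕ Fin nT) (Fin p) ℝ)
    (Kstar : Matrix (Fin p) (Fin p) ℝ)
    (hfull : (Matrix.fromBlocks K k kᵀ Kstar).PosDef) :
    (Kstar - kᵀ * (K + Matrix.fromBlocks RS 0 0
        (σT2 • (1 : Matrix (Fin nT) (Fin nT) ℝ)))⁻¹ * k).PosDef ∧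
    ∀ g : Fin p → ℝ,
      (∫ fpair : (Fin nS → ℝ) × (Fin nT → ℝ),
          gaussDensity fpair.2 (σT2 • (1 : Matrix (Fin nT) (Fin nT) ℝ)) yT *
            gaussDensity fpair.1 RS mS *
            gaussDensity 0 (Matrix.fromBlocks K k kᵀ Kstar)
              (Sum.elim (Sum.elim fpair.1 fpair.2) g))
        = gaussDensity 0 (K + Matrix.fromBlocks RS 0 0
              (σT2 • (1 : Matrix (Fin nT) (Fin nT) ℝ))) (Sum.elim mS yT) *
          gaussDensity
            (kᵀ *ᵥ ((K + Matrix.fromBlocks RS 0 0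
                (σT2 • (1 : Matrix (Fin nT) (Fin nT) ℝ)))⁻¹ *ᵥ Sum.elim mS yT))
            (Kstar - kᵀ * (K + Matrix.fromBlocks RS 0 0
                (σT2 • (1 : Matrix (Fin nT) (Fin nT) ℝ)))⁻¹ * k) g := by
  classical
  -- notation
  set σI : Matrix (Fin nT) (Fin nT) ℝ := σT2 • (1 : Matrix (Fin nT) (Fin nT) ℝ) with hσIdef
  set Dm : Matrix (Fin nS ⊕ Fin nT) (Fin nS ⊕ Fin nT) ℝ := Matrix.fromBlocks RS 0 0 σI
    with hDmdef
  set w : (Fin nS ⊕ Fin nT) → ℝ := Sum.elim mS yT with hwdef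
  -- basic posdef facts
  have hσIP : σI.PosDef := by
    rw [hσIdef, Matrix.smul_one_eq_diagonal]
    exact Matrix.posDef_diagonal_iff.mpr fun _ => hσ
  have hDm : Dm.PosDef := by
    rw [hDmdef, show (0 : Matrix (Fin nT) (Fin nS) ℝ) = (0 : Matrix (Fin nS) (Fin nT) ℝ)ᵀ from
      (Matrix.transpose_zero).symm]
    refine posDef_fromBlocks hRS ?_
    simpa using hσIP
  have hKsym : Kᵀ = K := by
    rw [← Matrix.conjTranspose_eq_transpose_of_trivial]
    exact (posDef_toBlocks₁₁ hfull).1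
  have hKfsym : (Matrix.fromBlocks K k kᵀ Kstar)ᵀ = Matrix.fromBlocks K k kᵀ Kstar := by
    rw [← Matrix.conjTranspose_eq_transpose_of_trivial]
    exact hfull.1
  have hGeq : Matrix.fromBlocks (K + Dm) k kᵀ Kstar =
      Matrix.fromBlocks K k kᵀ Kstar + Matrix.fromBlocks Dm 0 0 0 := by
    rw [Matrix.fromBlocks_add, add_zero, add_zero, add_zero]
  have hGP : (Matrix.fromBlocks (K + Dm) k kᵀ Kstar).PosDef := by
    rw [hGeq]
    exact hfull.add_posSemidef (posSemidef_corner hDm.posSemidef)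
  have hKD : (K + Dm).PosDef := posDef_toBlocks₁₁ hGP
  have hSchurStar : (Kstar - kᵀ * (K + Dm)⁻¹ * k).PosDef := schur_posDef hGP
  refine ⟨hSchurStar, ?_⟩
  intro g
  -- the cross-covariance matrix
  set c : Matrix ((Fin nS ⊕ Fin nT) ⊕ Fin p) (Fin nS ⊕ Fin nT) ℝ := Matrix.fromRows K kᵀ
    with hcdef
  have hcT : cᵀ = Matrix.fromCols K k := by
    rw [hcdef, Matrix.transpose_fromRows, hKsym, Matrix.transpose_transpose]
  have hKfu : IsUnit (Matrix.fromBlocks K k kᵀ Kstar).det := hfull.det_pos.ne'.isUnit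
  have hcTKfinv : cᵀ * (Matrix.fromBlocks K k kᵀ Kstar)⁻¹ =
      Matrix.fromCols (1 : Matrix (Fin nS ⊕ Fin nT) (Fin nS ⊕ Fin nT) ℝ) 0 := by
    have h1 : cᵀ = Matrix.fromCols (1 : Matrix (Fin nS ⊕ Fin nT) (Fin nS ⊕ Fin nT) ℝ)
          (0 : Matrix (Fin nS ⊕ Fin nT) (Fin p) ℝ) *
        Matrix.fromBlocks K k kᵀ Kstar := by
      rw [hcT, Matrix.fromCols_mul_fromBlocks, Matrix.one_mul, Matrix.one_mul,
        Matrix.zero_mul, Matrix.zero_mul, add_zero, add_zero]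
    rw [h1, Matrix.mul_assoc, Matrix.mul_nonsing_inv _ hKfu, Matrix.mul_one]
  have hmean : ∀ (f : (Fin nS ⊕ Fin nT) → ℝ) (g' : Fin p → ℝ),
      cᵀ *ᵥ ((Matrix.fromBlocks K k kᵀ Kstar)⁻¹ *ᵥ Sum.elim f g') = f := by
    intro f g'
    rw [Matrix.mulVec_mulVec, hcTKfinv, Matrix.fromCols_mulVec_sumElim,
      Matrix.one_mulVec, Matrix.zero_mulVec, add_zero]
  have hcKc : cᵀ * (Matrix.fromBlocks K k kᵀ Kstar)⁻¹ * c = K := by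
    rw [hcTKfinv, hcdef, Matrix.fromCols_mul_fromRows, Matrix.one_mul, Matrix.zero_mul,
      add_zero]
  have hHschur : (K + Dm) - cᵀ * (Matrix.fromBlocks K k kᵀ Kstar)⁻¹ * c = Dm := by
    rw [hcKc]
    exact add_sub_cancel_left K Dm
  have hH : (Matrix.fromBlocks (Matrix.fromBlocks K k kᵀ Kstar) c cᵀ (K + Dm)).PosDef :=
    posDef_fromBlocks hfull (by rw [hHschur]; exact hDm)
  -- the permutation
  let φ : ((Fin nS ⊕ Fin nT) ⊕ Fin p) ⊕ (Fin nS ⊕ Fin nT) →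
      ((Fin nS ⊕ Fin nT) ⊕ Fin p) ⊕ (Fin nS ⊕ Fin nT) :=
    Sum.elim (Sum.elim (fun i => Sum.inr i) (fun t => Sum.inl (Sum.inr t)))
      (fun i => Sum.inl (Sum.inl i))
  have hφφ : ∀ a, φ (φ a) = a := by rintro ((i | t) | i) <;> rfl
  let σe : (((Fin nS ⊕ Fin nT) ⊕ Fin p) ⊕ (Fin nS ⊕ Fin nT)) ≃
      (((Fin nS ⊕ Fin nT) ⊕ Fin p) ⊕ (Fin nS ⊕ Fin nT)) := ⟨φ, φ, hφφ, hφφ⟩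
  have hKe : ∀ i j, K i j = K j i := by
    intro i j
    have h := congr_fun (congr_fun hKsym j) i
    rwa [Matrix.transpose_apply] at h
  have hH'eq : (Matrix.fromBlocks (Matrix.fromBlocks K k kᵀ Kstar) c cᵀ (K + Dm)).submatrix
      σe σe = Matrix.fromBlocks (Matrix.fromBlocks (K + Dm) k kᵀ Kstar) c cᵀ K := by
    ext a b
    rcases a with ((i | t) | i) <;> rcases b with ((j | s) | j) <;>
      simp [σe, φ, Matrix.fromBlocks, Matrix.fromCols, hcdef] <;>
      exact hKe _ _
  have hH'P : (Matrix.fromBlocks (Matrix.fromBlocks (K + Dm) k kᵀ Kstar) c cᵀ K).PosDef := by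
    rw [← hH'eq]
    exact posDef_submatrix_equiv hH σe
  have hSfP : (K - cᵀ * (Matrix.fromBlocks (K + Dm) k kᵀ Kstar)⁻¹ * c).PosDef :=
    schur_posDef hH'P
  have hpoint : ∀ (f : (Fin nS ⊕ Fin nT) → ℝ) (g' : Fin p → ℝ),
      (Sum.elim (Sum.elim f g') w) ∘ σe = Sum.elim (Sum.elim w g') f := by
    intro f g'
    funext a
    rcases a with ((i | t) | i) <;> rfl
  -- combining the two noise densities
  have hnoise : ∀ (f1 : Fin nS → ℝ) (f2 : Fin nT → ℝ),
      gaussDensity f2 σI yT * gaussDensity f1 RS mS =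
        gaussDensity (Sum.elim f1 f2) Dm w := by
    intro f1 f2
    have hsub : w - Sum.elim f1 f2 = Sum.elim (mS - f1) (yT - f2) := by
      funext a
      rcases a with i | i <;> rfl
    have hDm' : (Matrix.fromBlocks RS (0 : Matrix (Fin nS) (Fin nT) ℝ)
        (0 : Matrix (Fin nS) (Fin nT) ℝ)ᵀ σI).PosDef := by
      rw [Matrix.transpose_zero, ← hDmdef]
      exact hDm
    have hsplit := gauss_fromBlocks hDm' (mS - f1) (yT - f2)
    simp only [Matrix.transpose_zero, Matrix.zero_mulVec, Matrix.mul_zero, Matrix.zero_mul,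
      sub_zero, Matrix.mulVec_zero] at hsplit
    rw [gauss_shift f2 yT, gauss_shift f1 mS, gauss_shift (Sum.elim f1 f2) w, hsub]
    rw [hDmdef, hsplit]
    ring
  -- the pointwise main identity
  have key : ∀ (f1 : Fin nS → ℝ) (f2 : Fin nT → ℝ),
      gaussDensity f2 σI yT * gaussDensity f1 RS mS *
        gaussDensity 0 (Matrix.fromBlocks K k kᵀ Kstar) (Sum.elim (Sum.elim f1 f2) g) =
      (gaussDensity 0 (K + Dm) w *
        gaussDensity (kᵀ *ᵥ ((K + Dm)⁻¹ *ᵥ w)) (Kstar - kᵀ * (K + Dm)⁻¹ * k) g) *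
        gaussDensity (cᵀ *ᵥ ((Matrix.fromBlocks (K + Dm) k kᵀ Kstar)⁻¹ *ᵥ Sum.elim w g))
          (K - cᵀ * (Matrix.fromBlocks (K + Dm) k kᵀ Kstar)⁻¹ * c) (Sum.elim f1 f2) := by
    intro f1 f2
    rw [hnoise f1 f2]
    have h1 := gauss_fromBlocks hH (Sum.elim (Sum.elim f1 f2) g) w
    rw [hmean, hHschur] at h1
    rw [mul_comm (gaussDensity (Sum.elim f1 f2) Dm w), ← h1]
    have h2 := gauss_reindex σe 0
      (Matrix.fromBlocks (Matrix.fromBlocks K k kᵀ Kstar) c cᵀ (K + Dm))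
      (Sum.elim (Sum.elim (Sum.elim f1 f2) g) w)
    rw [← h2, show (0 : (((Fin nS ⊕ Fin nT) ⊕ Fin p) ⊕ (Fin nS ⊕ Fin nT)) → ℝ) ∘ σe = 0 from
      rfl, hpoint, hH'eq, gauss_fromBlocks hH'P (Sum.elim w g) (Sum.elim f1 f2),
      gauss_fromBlocks hGP w g]
  -- integrate out f
  have hint : (∫ fpair : (Fin nS → ℝ) × (Fin nT → ℝ),
      gaussDensity (cᵀ *ᵥ ((Matrix.fromBlocks (K + Dm) k kᵀ Kstar)⁻¹ *ᵥ Sum.elim w g))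
        (K - cᵀ * (Matrix.fromBlocks (K + Dm) k kᵀ Kstar)⁻¹ * c)
        (Sum.elim fpair.1 fpair.2)) = 1 := by
    have hmp := MeasureTheory.volume_measurePreserving_sumPiEquivProdPi_symm
      (fun _ : Fin nS ⊕ Fin nT => ℝ)
    have hcomp := hmp.integral_comp'
      (gaussDensity (cᵀ *ᵥ ((Matrix.fromBlocks (K + Dm) k kᵀ Kstar)⁻¹ *ᵥ Sum.elim w g))
        (K - cᵀ * (Matrix.fromBlocks (K + Dm) k kᵀ Kstar)⁻¹ * c))
    rw [← integral_gaussDensity hSfP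
      (cᵀ *ᵥ ((Matrix.fromBlocks (K + Dm) k kᵀ Kstar)⁻¹ *ᵥ Sum.elim w g)), ← hcomp]
    congr 1
  calc (∫ fpair : (Fin nS → ℝ) × (Fin nT → ℝ),
        gaussDensity fpair.2 σI yT * gaussDensity fpair.1 RS mS *
          gaussDensity 0 (Matrix.fromBlocks K k kᵀ Kstar)
            (Sum.elim (Sum.elim fpair.1 fpair.2) g))
      = ∫ fpair : (Fin nS → ℝ) × (Fin nT → ℝ),
          (gaussDensity 0 (K + Dm) w *
            gaussDensity (kᵀ *ᵥ ((K + Dm)⁻¹ *ᵥ w)) (Kstar - kᵀ * (K + Dm)⁻¹ * k) g) *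
          gaussDensity (cᵀ *ᵥ ((Matrix.fromBlocks (K + Dm) k kᵀ Kstar)⁻¹ *ᵥ Sum.elim w g))
            (K - cᵀ * (Matrix.fromBlocks (K + Dm) k kᵀ Kstar)⁻¹ * c)
            (Sum.elim fpair.1 fpair.2) := by
        congr 1
        funext fpair
        exact key fpair.1 fpair.2
    _ = (gaussDensity 0 (K + Dm) w *
          gaussDensity (kᵀ *ᵥ ((K + Dm)⁻¹ *ᵥ w)) (Kstar - kᵀ * (K + Dm)⁻¹ * k) g) * 1 := by
        rw [MeasureTheory.integral_const_mul, hint]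
    _ = _ := by rw [mul_one]
end

section
/- (Remark 2 of the paper, robust transfer: limit of the FPD-optimal target mean under non-informative source knowledge.) Let n_S, n_T ≥ 1, σ_T² > 0, m̄_S ∈ ℝ^{n_S}, y_T ∈ ℝ^{n_T}, u ∈ ℝ^{n_S}, v ∈ ℝ^{n_T}, and let K be a symmetric positive-semidefinite (n_S+n_T)×(n_S+n_T) matrix with blocks K_SS ∈ ℝ^{n_S×n_S}, K_ST ∈ ℝ^{n_S×n_T}, K_TS = K_STᵀ, K_TT ∈ ℝ^{n_T×n_T}. For β > 0 set D_β := blkdiag(β⁻¹ I_{n_S}, σ_T² I_{n_T}), so that K + D_β is positive definite. Then, as β → 0⁺, the FPD-optimal target posterior mean (u, v)ᵀ (K + D_β)⁻¹ (m̄_S, y_T) converges to vᵀ (K_TT + σ_T² I_{n_T})⁻¹ y_T, the posterior mean of the isolated (no-transfer) target task. -/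
open Matrix Filter

set_option maxHeartbeats 1600000

/-- Remark 2 of the paper, robust transfer: limit of the FPD-optimal
target mean under non-informative source knowledge: with
`K = [[K_SS, K_ST], [K_STᵀ, K_TT]]` positive semidefinite and
`D_β = blkdiag(β⁻¹ I, σ_T² I)`, as `β → 0⁺`, the FPD-optimal target posterior mean
`(u, v)ᵀ (K + D_β)⁻¹ (m̄_S, y_T)` converges to `vᵀ (K_TT + σ_T² I)⁻¹ y_T`, the posterior
mean of the isolated (no-transfer) target task. -/
theorem robust_transfer_mean_limit (nS nT : ℕ) (hnS : 1 ≤ nS) (hnT : 1 ≤ nT)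
    (σT2 : ℝ) (hσ : 0 < σT2) (mS : Fin nS → ℝ) (yT : Fin nT → ℝ)
    (u : Fin nS → ℝ) (v : Fin nT → ℝ)
    (KSS : Matrix (Fin nS) (Fin nS) ℝ) (KST : Matrix (Fin nS) (Fin nT) ℝ)
    (KTT : Matrix (Fin nT) (Fin nT) ℝ)
    (hK : (Matrix.fromBlocks KSS KST KSTᵀ KTT).PosSemidef) :
    Tendsto
      (fun β : ℝ =>
        Sum.elim u v ⬝ᵥ
          ((Matrix.fromBlocks KSS KST KSTᵀ KTT +
              Matrix.fromBlocks (β⁻¹ • (1 : Matrix (Fin nS) (Fin nS) ℝ)) 0 0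
                (σT2 • (1 : Matrix (Fin nT) (Fin nT) ℝ)))⁻¹ *ᵥ Sum.elim mS yT))
      (nhdsWithin 0 (Set.Ioi 0))
      (nhds (v ⬝ᵥ ((KTT + σT2 • (1 : Matrix (Fin nT) (Fin nT) ℝ))⁻¹ *ᵥ yT))) := by
  set T : Matrix (Fin nT) (Fin nT) ℝ := KTT + σT2 • 1 with hTdef
  -- K_TT is PSD
  have hKTT : KTT.PosSemidef := by
    have h := hK.submatrix Sum.inr
    have : (Matrix.fromBlocks KSS KST KSTᵀ KTT).submatrix Sum.inr Sum.inr = KTT := by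
      ext i j; simp [Matrix.submatrix]
    rwa [this] at h
  have hTpd : T.PosDef := by
    refine Matrix.PosDef.posSemidef_add hKTT ?_
    rw [Matrix.smul_one_eq_diagonal]
    exact Matrix.PosDef.diagonal fun _ => hσ
  have hTunit : IsUnit T.det := hTpd.det_pos.ne'.isUnit
  -- the reparametrized matrices
  set A : ℝ → Matrix (Fin nS ⊕ Fin nT) (Fin nS ⊕ Fin nT) ℝ :=
    fun β => Matrix.fromBlocks (1 + β • KSS) (β • KST) KSTᵀ T with hAdef
  set E : ℝ → Matrix (Fin nS ⊕ Fin nT) (Fin nS ⊕ Fin nT) ℝ :=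
    fun β => Matrix.fromBlocks (β • (1 : Matrix (Fin nS) (Fin nS) ℝ)) 0 0 1 with hEdef
  set w : Fin nS ⊕ Fin nT → ℝ := Sum.elim mS yT with hwdef
  set c : Fin nS ⊕ Fin nT → ℝ := Sum.elim u v with hcdef
  -- A 0 computed
  have hA0 : A 0 = Matrix.fromBlocks 1 0 KSTᵀ T := by
    simp [hAdef]
  have hA0det : (A 0).det ≠ 0 := by
    rw [hA0, Matrix.det_fromBlocks_zero₁₂, Matrix.det_one, one_mul]
    exact hTpd.det_pos.ne'
  have hA0unit : IsUnit (A 0).det := hA0det.isUnit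
  -- the auxiliary continuous function
  set g : ℝ → ℝ := fun β => c ⬝ᵥ (((((A β).det)⁻¹ • (A β).adjugate) * E β) *ᵥ w) with hgdef
  have hinv : ∀ β, ((A β).det)⁻¹ • (A β).adjugate = (A β)⁻¹ := by
    intro β
    rw [Matrix.inv_def, Ring.inverse_eq_inv]
  -- continuity of A and E
  have hAcont : Continuous A := by
    have : A = fun β => Matrix.fromBlocks 1 0 KSTᵀ T +
        β • Matrix.fromBlocks KSS KST 0 0 := by
      funext β
      rw [Matrix.fromBlocks_smul, Matrix.fromBlocks_add]
      simp [hAdef]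
    rw [this]
    exact continuous_const.add (continuous_id.smul continuous_const)
  have hEcont : Continuous E := by
    have : E = fun β => Matrix.fromBlocks 0 0 0 1 +
        β • Matrix.fromBlocks 1 0 0 0 := by
      funext β
      rw [Matrix.fromBlocks_smul, Matrix.fromBlocks_add]
      simp [hEdef]
    rw [this]
    exact continuous_const.add (continuous_id.smul continuous_const)
  have hgcont : ContinuousAt g 0 := by
    have houter : Continuous (fun p : Matrix (Fin nS ⊕ Fin nT) (Fin nS ⊕ Fin nT) ℝ ×
        Matrix (Fin nS ⊕ Fin nT) (Fin nS ⊕ Fin nT) ℝ => c ⬝ᵥ ((p.1 * p.2) *ᵥ w)) :=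
      continuous_const.dotProduct
        ((continuous_fst.matrix_mul continuous_snd).matrix_mulVec continuous_const)
    have hdet : Continuous fun β => (A β).det := hAcont.matrix_det
    have hadj : Continuous fun β => (A β).adjugate := hAcont.matrix_adjugate
    have hinner : ContinuousAt (fun β => (((A β).det)⁻¹ • (A β).adjugate, E β)) 0 :=
      ((hdet.continuousAt.inv₀ hA0det).smul hadj.continuousAt).prodMk hEcont.continuousAt
    have h := ContinuousAt.comp (houter.continuousAt) hinner
    exact h
  -- value of g at 0
  have hg0 : g 0 = v ⬝ᵥ (T⁻¹ *ᵥ yT) := by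
    have hx : A 0 *ᵥ Sum.elim (0 : Fin nS → ℝ) (T⁻¹ *ᵥ yT) = E 0 *ᵥ w := by
      rw [hA0]
      simp [hEdef, hwdef, Matrix.fromBlocks_mulVec, Matrix.mulVec_mulVec,
        Matrix.mul_nonsing_inv T hTunit]
    have h2 : ((((A 0).det)⁻¹ • (A 0).adjugate) * E 0) *ᵥ w
        = Sum.elim (0 : Fin nS → ℝ) (T⁻¹ *ᵥ yT) := by
      rw [hinv 0, ← Matrix.mulVec_mulVec, ← hx, Matrix.mulVec_mulVec,
        Matrix.nonsing_inv_mul _ hA0unit, Matrix.one_mulVec]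
    rw [hgdef]
    simp only [h2, hcdef]
    rw [sumElim_dotProduct_sumElim, dotProduct_zero, zero_add]
  -- g agrees with the original function on Ioi 0
  have hagree : ∀ β ∈ Set.Ioi (0 : ℝ),
      c ⬝ᵥ
        ((Matrix.fromBlocks KSS KST KSTᵀ KTT +
            Matrix.fromBlocks (β⁻¹ • (1 : Matrix (Fin nS) (Fin nS) ℝ)) 0 0
              (σT2 • (1 : Matrix (Fin nT) (Fin nT) ℝ)))⁻¹ *ᵥ w) = g β := by
    intro β hβ
    have hβ0 : (0 : ℝ) < β := hβ
    have hM : Matrix.fromBlocks KSS KST KSTᵀ KTT +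
        Matrix.fromBlocks (β⁻¹ • (1 : Matrix (Fin nS) (Fin nS) ℝ)) 0 0
          (σT2 • (1 : Matrix (Fin nT) (Fin nT) ℝ))
        = Matrix.fromBlocks (KSS + β⁻¹ • 1) KST KSTᵀ T := by
      rw [Matrix.fromBlocks_add]
      simp [hTdef]
    have hDdiag : Matrix.fromBlocks (β⁻¹ • (1 : Matrix (Fin nS) (Fin nS) ℝ)) 0 0
        (σT2 • (1 : Matrix (Fin nT) (Fin nT) ℝ))
        = Matrix.diagonal (Sum.elim (fun _ => β⁻¹) (fun _ => σT2)) := by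
      rw [Matrix.smul_one_eq_diagonal, Matrix.smul_one_eq_diagonal,
        Matrix.fromBlocks_diagonal]
    have hMpd : (Matrix.fromBlocks (KSS + β⁻¹ • 1) KST KSTᵀ T).PosDef := by
      rw [← hM, hDdiag]
      refine Matrix.PosDef.posSemidef_add hK (Matrix.PosDef.diagonal ?_)
      rintro (i | i)
      · simpa using inv_pos.mpr hβ0
      · simpa using hσ
    have hMunit : IsUnit (Matrix.fromBlocks (KSS + β⁻¹ • 1) KST KSTᵀ T).det :=
      hMpd.det_pos.ne'.isUnit
    have hEdiag : E β = Matrix.diagonal (Sum.elim (fun _ => β) (fun _ => 1)) := by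
      rw [hEdef]
      simp only
      rw [Matrix.smul_one_eq_diagonal, ← Matrix.diagonal_one, Matrix.fromBlocks_diagonal]
    have hEunit : IsUnit (E β).det := by
      rw [hEdiag]
      refine (Matrix.PosDef.diagonal ?_).det_pos.ne'.isUnit
      rintro (i | i)
      · simpa using hβ0
      · simp
    have hfact : A β = E β * Matrix.fromBlocks (KSS + β⁻¹ • 1) KST KSTᵀ T := by
      rw [hAdef, hEdef]
      simp only
      rw [Matrix.fromBlocks_multiply]
      simp [Matrix.smul_mul, smul_add, smul_smul, mul_inv_cancel₀ hβ0.ne', add_comm]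
    have hinveq : (Matrix.fromBlocks (KSS + β⁻¹ • 1) KST KSTᵀ T)⁻¹ = (A β)⁻¹ * E β := by
      rw [hfact, Matrix.mul_inv_rev, Matrix.mul_assoc,
        Matrix.nonsing_inv_mul _ hEunit, Matrix.mul_one]
    rw [hM, hinveq, hgdef]
    simp only [hinv]
  -- put everything together
  have htend : Tendsto g (nhdsWithin 0 (Set.Ioi 0)) (nhds (g 0)) :=
    hgcont.continuousWithinAt
  rw [hg0] at htend
  refine htend.congr' ?_ |>.mono_right ?_
  · exact Filter.eventuallyEq_of_mem self_mem_nhdsWithin fun β hβ => (hagree β hβ).symm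
  · exact le_of_eq rfl
end

section
/- (Remark 2 of the paper, robust transfer: limit of the FPD-optimal target covariance under non-informative source knowledge.) Let n_S, n_T ≥ 1, σ_T² > 0, u, u' ∈ ℝ^{n_S}, v, v' ∈ ℝ^{n_T}, w ∈ ℝ, and let K be a symmetric positive-semidefinite (n_S+n_T)×(n_S+n_T) matrix with blocks K_SS ∈ ℝ^{n_S×n_S}, K_ST ∈ ℝ^{n_S×n_T}, K_TS = K_STᵀ, K_TT ∈ ℝ^{n_T×n_T}. For β > 0 set D_β := blkdiag(β⁻¹ I_{n_S}, σ_T² I_{n_T}), so that K + D_β is positive definite. Then, as β → 0⁺, the FPD-optimal target posterior covariance w − (u, v)ᵀ (K + D_β)⁻¹ (u', v') converges to w − vᵀ (K_TT + σ_T² I_{n_T})⁻¹ v', the posterior covariance of the isolated (no-transfer) target task. -/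
open Matrix Filter

set_option maxHeartbeats 1000000 in
/-- Remark 2 of the paper, robust transfer: limit of the FPD-optimal
target covariance under non-informative source knowledge: with
`K = [[K_SS, K_ST], [K_STᵀ, K_TT]]` positive semidefinite and
`D_β = blkdiag(β⁻¹ I, σ_T² I)`, as `β → 0⁺`, the FPD-optimal target posterior covariance
`w − (u, v)ᵀ (K + D_β)⁻¹ (u', v')` converges to `w − vᵀ (K_TT + σ_T² I)⁻¹ v'`, the
posterior covariance of the isolated (no-transfer) target task. -/
theorem robust_transfer_covariance_limit (nS nT : ℕ) (hnS : 1 ≤ nS) (hnT : 1 ≤ nT)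
    (σT2 : ℝ) (hσ : 0 < σT2) (u u' : Fin nS → ℝ) (v v' : Fin nT → ℝ) (w : ℝ)
    (KSS : Matrix (Fin nS) (Fin nS) ℝ) (KST : Matrix (Fin nS) (Fin nT) ℝ)
    (KTT : Matrix (Fin nT) (Fin nT) ℝ)
    (hK : (Matrix.fromBlocks KSS KST KSTᵀ KTT).PosSemidef) :
    Tendsto
      (fun β : ℝ =>
        w - Sum.elim u v ⬝ᵥ
          ((Matrix.fromBlocks KSS KST KSTᵀ KTT +
              Matrix.fromBlocks (β⁻¹ • (1 : Matrix (Fin nS) (Fin nS) ℝ)) 0 0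
                (σT2 • (1 : Matrix (Fin nT) (Fin nT) ℝ)))⁻¹ *ᵥ Sum.elim u' v'))
      (nhdsWithin 0 (Set.Ioi 0))
      (nhds (w - v ⬝ᵥ ((KTT + σT2 • (1 : Matrix (Fin nT) (Fin nT) ℝ))⁻¹ *ᵥ v'))) := by
  set K : Matrix (Fin nS ⊕ Fin nT) (Fin nS ⊕ Fin nT) ℝ := Matrix.fromBlocks KSS KST KSTᵀ KTT with hKdef
  set S : Matrix (Fin nT) (Fin nT) ℝ := KTT + σT2 • 1 with hSdef
  set E : ℝ → Matrix (Fin nS ⊕ Fin nT) (Fin nS ⊕ Fin nT) ℝ :=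
    fun β => Matrix.fromBlocks (β • 1) 0 0 1 with hEdef
  set N : ℝ → Matrix (Fin nS ⊕ Fin nT) (Fin nS ⊕ Fin nT) ℝ :=
    fun β => E β * K + Matrix.fromBlocks 1 0 0 (σT2 • 1) with hNdef
  -- S is positive definite
  have hKTT : KTT.PosSemidef := by
    have h := hK.submatrix Sum.inr
    have : K.submatrix Sum.inr Sum.inr = KTT := by
      ext i j; simp [hKdef, Matrix.fromBlocks]
    rwa [this] at h
  have hσ1 : (σT2 • (1 : Matrix (Fin nT) (Fin nT) ℝ)).PosDef := by
    rw [Matrix.smul_one_eq_diagonal]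
    exact Matrix.posDef_diagonal_iff.mpr fun _ => hσ
  have hS : S.PosDef := Matrix.PosDef.posSemidef_add hKTT hσ1
  have hSdet : IsUnit S.det := hS.det_pos.ne'.isUnit
  -- N 0 is the block-lower-triangular matrix
  have hN0 : N 0 = Matrix.fromBlocks 1 0 KSTᵀ S := by
    simp [hNdef, hEdef, hKdef, Matrix.fromBlocks_multiply, Matrix.fromBlocks_add, hSdef, add_comm]
  have hN0det : IsUnit (N 0).det := by
    rw [hN0, Matrix.det_fromBlocks_zero₁₂]
    simpa using hSdet
  -- the auxiliary continuous function
  have hEcont : Continuous E := by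
    apply Continuous.matrix_fromBlocks
    · exact (continuous_id.smul continuous_const)
    all_goals exact continuous_const
  have hNcont : Continuous N := (hEcont.matrix_mul continuous_const).add continuous_const
  have hInv : ContinuousAt Inv.inv (N 0) := by
    apply continuousAt_matrix_inv
    obtain ⟨x, hx⟩ := hN0det
    rw [← hx]
    exact NormedRing.inverse_continuousAt x
  have hgcont : ContinuousAt (fun β =>
      w - Sum.elim u v ⬝ᵥ ((N β)⁻¹ *ᵥ (E β *ᵥ Sum.elim u' v'))) 0 := by
    have h1 : ContinuousAt (fun β => (N β)⁻¹) 0 := hInv.comp hNcont.continuousAt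
    have h2 : Continuous (fun p : (Matrix (Fin nS ⊕ Fin nT) (Fin nS ⊕ Fin nT) ℝ) ×
        (Matrix (Fin nS ⊕ Fin nT) (Fin nS ⊕ Fin nT) ℝ) =>
        w - Sum.elim u v ⬝ᵥ (p.1 *ᵥ (p.2 *ᵥ Sum.elim u' v'))) := by
      have c1 : Continuous (fun p : (Matrix (Fin nS ⊕ Fin nT) (Fin nS ⊕ Fin nT) ℝ) ×
          (Matrix (Fin nS ⊕ Fin nT) (Fin nS ⊕ Fin nT) ℝ) => p.2 *ᵥ Sum.elim u' v') :=
        continuous_snd.matrix_mulVec continuous_const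
      have c2 : Continuous (fun p : (Matrix (Fin nS ⊕ Fin nT) (Fin nS ⊕ Fin nT) ℝ) ×
          (Matrix (Fin nS ⊕ Fin nT) (Fin nS ⊕ Fin nT) ℝ) => p.1 *ᵥ (p.2 *ᵥ Sum.elim u' v')) :=
        continuous_fst.matrix_mulVec c1
      have c3 : Continuous (fun p : (Matrix (Fin nS ⊕ Fin nT) (Fin nS ⊕ Fin nT) ℝ) ×
          (Matrix (Fin nS ⊕ Fin nT) (Fin nS ⊕ Fin nT) ℝ) =>
          Sum.elim u v ⬝ᵥ (p.1 *ᵥ (p.2 *ᵥ Sum.elim u' v'))) :=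
        continuous_const.dotProduct c2
      exact continuous_const.sub c3
    have h3 : ContinuousAt (fun β : ℝ => ((N β)⁻¹, E β)) 0 := h1.prodMk hEcont.continuousAt
    simpa [Function.comp_def] using h2.continuousAt.comp h3
  -- value of g at 0
  have hg0 : w - Sum.elim u v ⬝ᵥ ((N 0)⁻¹ *ᵥ (E 0 *ᵥ Sum.elim u' v'))
      = w - v ⬝ᵥ (S⁻¹ *ᵥ v') := by
    have hE0 : E 0 *ᵥ Sum.elim u' v' = Sum.elim (0 : Fin nS → ℝ) v' := by
      simp [hEdef, Matrix.fromBlocks_mulVec]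
    have hkey : N 0 *ᵥ Sum.elim (0 : Fin nS → ℝ) (S⁻¹ *ᵥ v') = Sum.elim (0 : Fin nS → ℝ) v' := by
      rw [hN0, Matrix.fromBlocks_mulVec]
      simp [Matrix.mulVec_mulVec, Matrix.mul_nonsing_inv S hSdet]
    have : (N 0)⁻¹ *ᵥ (E 0 *ᵥ Sum.elim u' v') = Sum.elim (0 : Fin nS → ℝ) (S⁻¹ *ᵥ v') := by
      rw [hE0, ← hkey, Matrix.mulVec_mulVec, Matrix.nonsing_inv_mul _ hN0det, Matrix.one_mulVec]
    simp only [this, sumElim_dotProduct_sumElim, dotProduct_zero, zero_add]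
  -- g tends to the limit
  have hgt : Tendsto (fun β =>
      w - Sum.elim u v ⬝ᵥ ((N β)⁻¹ *ᵥ (E β *ᵥ Sum.elim u' v')))
      (nhdsWithin 0 (Set.Ioi 0)) (nhds (w - v ⬝ᵥ (S⁻¹ *ᵥ v'))) := by
    rw [← hg0]
    exact hgcont.continuousWithinAt.tendsto
  -- eventual equality on Ioi 0
  refine hgt.congr' ?_ |>.mono_right (by rw [hSdef])
  · filter_upwards [self_mem_nhdsWithin] with β (hβ : 0 < β)
    have hβ' : β ≠ 0 := hβ.ne'
    have hEdet : IsUnit (E β).det := by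
      have : (E β).det = β ^ nS := by
        simp [hEdef, Matrix.det_fromBlocks_zero₁₂, Matrix.det_smul]
      rw [this]
      exact (pow_ne_zero _ hβ').isUnit
    have hfac : N β = E β * (K + Matrix.fromBlocks (β⁻¹ • 1) 0 0 (σT2 • 1)) := by
      rw [hNdef]
      simp only [Matrix.mul_add]
      congr 1
      simp [hEdef, Matrix.fromBlocks_multiply, smul_smul, mul_inv_cancel₀ hβ',
        inv_mul_cancel₀ hβ']
    rw [Matrix.mulVec_mulVec, hfac, Matrix.mul_inv_rev, mul_assoc,
      Matrix.nonsing_inv_mul _ hEdet, mul_one]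
end
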